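/- Let K = GF(2) and f nilpotent on V such that the Jordan form of f contains exactly one block of size a_ρ and exactly one block of size a_τ with a_τ > a_ρ + 1. Let Y = {y ∈ V : e(y) = 2, h(y) = a_ρ − 1, h(fy) = a_τ − 1}. Then the subspace ⟨Y⟩ generated by Y is characteristic but not hyperinvariant. -/

import Mathlib

/-!
An automorphism commuting with `f` preserves exponents and heights, hence permutes `Y`; so `⟨Y⟩` is
characteristic.

For the other half, decompose `V` into Jordan blocks. As `d(a_τ) ≠ 0`, some block `Vᵢ` (of size at
least `a_τ`) contains `w` with `f^(a_τ-1) w` of height exactly `a_τ - 1`; as `d(a_ρ) ≠ 0`, there is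
`c ∈ ker f` of height `a_ρ - 1` with no component in `Vᵢ`. Then `y₀ = c + f^(a_τ-2) w ∈ Y`, and the
projection onto `Vᵢ`, which commutes with `f`, sends `y₀` to `f^(a_τ-2) w`. A one-dimensional space
over GF(2) has a single nonzero vector, so `d(r) = 1` says that any two elements of `ker f` of
height exactly `r - 1` agree modulo `Im f^r`. Applied to `r = a_ρ` and `r = a_τ`, this makes all
elements of `Y` agree modulo `F = {x ∈ Im f^(a_ρ) | f x ∈ Im f^(a_τ)}`, so `⟨Y⟩ ≤ ⟨y₀⟩ + F`; but
`f^(a_τ-2) w ∉ ⟨y₀⟩ + F`.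
-/

open LinearMap

variable {K : Type*} [Field K] {V : Type*} [AddCommGroup V] [Module K V]

/-- `X` is hyperinvariant for `f`: invariant under every endomorphism commuting with `f`. -/
def Hinv (f : V →ₗ[K] V) (X : Submodule K V) : Prop :=
  ∀ g : V →ₗ[K] V, g ∘ₗ f = f ∘ₗ g → X.map g ≤ X

/-- `X` is characteristic for `f`: `f`-invariant and fixed by every automorphism commuting with `f`. -/
def Chinv (f : V →ₗ[K] V) (X : Submodule K V) : Prop :=
  X.map f ≤ X ∧
    ∀ α : V ≃ₗ[K] V, (α : V →ₗ[K] V) ∘ₗ f = f ∘ₗ (α : V →ₗ[K] V) →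
      X.map (α : V →ₗ[K] V) = X

/-- The cyclic subspace generated by `x`. -/
def cyc (f : V →ₗ[K] V) (x : V) : Submodule K V :=
  Submodule.span K (Set.range fun i : ℕ => (f ^ i) x)

/-- `x` has exponent `ℓ`. -/
def ExpEq (f : V →ₗ[K] V) (x : V) (ℓ : ℕ) : Prop :=
  (f ^ ℓ) x = 0 ∧ ∀ j < ℓ, (f ^ j) x ≠ 0

/-- `x` has height `q`. -/
def HeightEq (f : V →ₗ[K] V) (x : V) (q : ℕ) : Prop :=
  x ∈ LinearMap.range (f ^ q) ∧ x ∉ LinearMap.range (f ^ (q + 1))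

/-- The `r`-th Ulm invariant: number of Jordan blocks of size `r` (for `r ≥ 1`). -/
noncomputable def ulm (f : V →ₗ[K] V) (r : ℕ) : ℕ :=
  Module.finrank K ↥(LinearMap.ker f ⊓ LinearMap.range (f ^ (r - 1))) -
    Module.finrank K ↥(LinearMap.ker f ⊓ LinearMap.range (f ^ r))

/-- `u` is a generator tuple with exponents `t`. -/
def IsGenTuple {k : ℕ} (f : V →ₗ[K] V) (u : Fin k → V) (t : Fin k → ℕ) : Prop :=
  (∀ i, ExpEq f (u i) (t i)) ∧ DirectSum.IsInternal (fun i => cyc f (u i))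

/-- The summand `⟨U_a⟩` of all cyclic subspaces whose generator has exponent `a`. -/
def subU {k : ℕ} (f : V →ₗ[K] V) (u : Fin k → V) (t : Fin k → ℕ) (a : ℕ) : Submodule K V :=
  ⨆ i ∈ {i : Fin k | t i = a}, cyc f (u i)

open Polynomial DirectSum

theorem range_pow_le_range_pow (f : Module.End K V) {a b : ℕ} (h : a ≤ b) :
    range (f ^ b) ≤ range (f ^ a) :=
  (iterateRange f).monotone h

section Commute

variable {f g : Module.End K V}

theorem Commute.apply_apply (h : Commute g f) (x : V) : g (f x) = f (g x) :=
  LinearMap.congr_fun h.eq x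

theorem Commute.apply_pow_apply (h : Commute g f) (i : ℕ) (x : V) :
    g ((f ^ i) x) = (f ^ i) (g x) :=
  LinearMap.congr_fun (h.pow_right i).eq x

theorem Commute.apply_mem_range_pow (h : Commute g f) {q : ℕ} {x : V}
    (hx : x ∈ range (f ^ q)) : g x ∈ range (f ^ q) := by
  obtain ⟨z, rfl⟩ := hx
  exact ⟨g z, (h.apply_pow_apply q z).symm⟩

theorem LinearEquiv.commute_symm {e : V ≃ₗ[K] V} (h : Commute (e : Module.End K V) f) :
    Commute (e.symm : Module.End K V) f := by
  ext x
  apply e.injective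
  have := h.apply_apply (e.symm x)
  simp only [LinearEquiv.coe_coe, LinearEquiv.apply_symm_apply] at this
  simp only [Module.End.mul_apply, LinearEquiv.coe_coe, LinearEquiv.apply_symm_apply, this]

variable {e : V ≃ₗ[K] V}

theorem LinearEquiv.apply_mem_range_pow_iff (h : Commute (e : Module.End K V) f) {q : ℕ}
    {x : V} :
    e x ∈ range (f ^ q) ↔ x ∈ range (f ^ q) :=
  ⟨fun hx => by simpa using (LinearEquiv.commute_symm h).apply_mem_range_pow hx,
    h.apply_mem_range_pow⟩

theorem LinearEquiv.expEq_apply_iff (h : Commute (e : Module.End K V) f) {x : V} {ℓ : ℕ} :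
    ExpEq f (e x) ℓ ↔ ExpEq f x ℓ := by
  have hpow : ∀ j, (f ^ j) (e x) = e ((f ^ j) x) := fun j => (h.apply_pow_apply j x).symm
  simp only [ExpEq, hpow, ne_eq, LinearEquiv.map_eq_zero_iff]

theorem LinearEquiv.heightEq_apply_iff (h : Commute (e : Module.End K V) f) {x : V} {q : ℕ} :
    HeightEq f (e x) q ↔ HeightEq f x q := by
  simp only [HeightEq, LinearEquiv.apply_mem_range_pow_iff h]

end Commute

section Cyclic

variable {f g : Module.End K V}

theorem map_cyc (h : Commute g f) (y : V) : (cyc f y).map g = cyc f (g y) := by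
  simp only [cyc, Submodule.map_span, ← Set.range_comp]
  congr
  funext i
  exact h.apply_pow_apply i y

theorem cyc_apply_le (f : Module.End K V) (y : V) : cyc f (f y) ≤ cyc f y := by
  rw [cyc, Submodule.span_le]
  rintro _ ⟨i, rfl⟩
  change (f ^ i) (f y) ∈ _
  rw [← Module.End.mul_apply, ← pow_succ]
  exact Submodule.subset_span ⟨i + 1, rfl⟩

theorem mem_cyc_self (f : Module.End K V) (y : V) : y ∈ cyc f y :=
  Submodule.subset_span ⟨0, by simp⟩

theorem map_iSup_cyc (h : Commute g f) (Y : Set V) :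
    (⨆ y ∈ Y, cyc f y).map g = ⨆ y ∈ g '' Y, cyc f y := by
  simp only [Submodule.map_iSup, map_cyc h, iSup_image]

theorem chinv_iSup_cyc {Y : Set V}
    (hY : ∀ e : V ≃ₗ[K] V, Commute (e : Module.End K V) f → e '' Y = Y) :
    Chinv f (⨆ y ∈ Y, cyc f y) := by
  refine ⟨?_, fun e he => ?_⟩
  · simp only [Submodule.map_iSup, map_cyc (Commute.refl f)]
    exact iSup₂_mono fun y _ => cyc_apply_le f y
  · rw [map_iSup_cyc he, LinearEquiv.coe_coe, hY e he]

end Cyclic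

def expTwoHeightSet (f : Module.End K V) (p q : ℕ) : Set V :=
  {y | ExpEq f y 2 ∧ HeightEq f y p ∧ HeightEq f (f y) q}

section ExpTwoHeightSet

variable {f : Module.End K V} {p q : ℕ}

theorem LinearEquiv.image_expTwoHeightSet {e : V ≃ₗ[K] V} (h : Commute (e : Module.End K V) f) :
    e '' expTwoHeightSet f p q = expTwoHeightSet f p q := by
  have hmem : ∀ y, e y ∈ expTwoHeightSet f p q ↔ y ∈ expTwoHeightSet f p q := fun y => by
    have hf : f (e y) = e (f y) := (h.apply_apply y).symm
    simp only [expTwoHeightSet, Set.mem_ofPred_eq, hf, e.expEq_apply_iff h, e.heightEq_apply_iff h]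
  ext x
  refine ⟨?_, fun hx => ⟨e.symm x, (hmem _).1 (by simpa using hx), by simp⟩⟩
  rintro ⟨y, hy, rfl⟩
  exact (hmem y).2 hy

theorem apply_mem_of_mem_expTwoHeightSet {y : V} (hy : y ∈ expTwoHeightSet f p q) :
    f y ∈ ker f ⊓ range (f ^ q) ∧ f y ∉ range (f ^ (q + 1)) :=
  ⟨Submodule.mem_inf.mpr ⟨by rw [mem_ker, ← Module.End.mul_apply, ← sq]; exact hy.1.1, hy.2.2.1⟩,
    hy.2.2.2⟩

theorem add_mem_expTwoHeightSet {c u : V} (hc : c ∈ ker f ⊓ range (f ^ p))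
    (hc' : c ∉ range (f ^ (p + 1))) (hu : u ∈ range (f ^ (p + 1)))
    (hfu : f u ∈ ker f ⊓ range (f ^ q)) (hfu' : f u ∉ range (f ^ (q + 1))) :
    c + u ∈ expTwoHeightSet f p q := by
  have hf : f (c + u) = f u := by rw [map_add, mem_ker.mp hc.1, zero_add]
  have hne : f u ≠ 0 := fun h => hfu' (h ▸ zero_mem _)
  refine ⟨⟨?_, fun j hj => ?_⟩, ⟨add_mem hc.2 (range_pow_le_range_pow f p.le_succ hu),
    fun h => hc' (by simpa using sub_mem h hu)⟩, hf ▸ ⟨hfu.2, hfu'⟩⟩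
  · rw [sq, Module.End.mul_apply, hf, mem_ker.mp hfu.1]
  · interval_cases j
    · exact fun h => hne (by rw [← hf, show c + u = 0 from h, map_zero])
    · simpa [hf] using hne

end ExpTwoHeightSet

theorem exists_mem_ker_inf_range_of_ulm_ne_zero {f : Module.End K V} {r : ℕ} (h : ulm f r ≠ 0) :
    ∃ x ∈ ker f ⊓ range (f ^ (r - 1)), x ∉ range (f ^ r) := by
  by_contra! hle
  refine h ?_
  have heq : ker f ⊓ range (f ^ (r - 1)) = ker f ⊓ range (f ^ r) :=
    le_antisymm (fun x hx => ⟨hx.1, hle x hx⟩)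
      (inf_le_inf_left _ (range_pow_le_range_pow f (Nat.sub_le r 1)))
  rw [ulm, heq, Nat.sub_self]

theorem exists_sub_pow_mem_ker_inf_range {f : Module.End K V} {r : ℕ} (hr : 1 ≤ r) {y : V}
    (hy : HeightEq f y (r - 1)) (hfy : f y ∈ range (f ^ (r + 1))) :
    ∃ z, y - (f ^ r) z ∈ ker f ⊓ range (f ^ (r - 1)) ∧ y - (f ^ r) z ∉ range (f ^ r) := by
  obtain ⟨z, hz⟩ := hfy
  have hy' : y ∉ range (f ^ r) := by simpa only [Nat.sub_add_cancel hr] using hy.2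
  refine ⟨z, Submodule.mem_inf.mpr
    ⟨?_, sub_mem hy.1 (range_pow_le_range_pow f (Nat.sub_le r 1) (mem_range_self _ z))⟩,
    fun h => hy' ?_⟩
  · rw [mem_ker, map_sub, ← Module.End.mul_apply, ← pow_succ', hz, sub_self]
  · simpa using add_mem h (mem_range_self (f ^ r) z)

theorem Ideal.Quotient.pow_smul_span_pow_eq_zero {R : Type*} [CommRing R] (t : R) (k : ℕ)
    (c : R ⧸ R ∙ t ^ k) : t ^ k • c = 0 := by
  obtain ⟨r, rfl⟩ := Submodule.Quotient.mk_surjective _ c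
  rw [← Submodule.Quotient.mk_smul, Submodule.Quotient.mk_eq_zero, smul_eq_mul]
  exact Ideal.mul_mem_right _ _ (Ideal.subset_span rfl)

theorem Ideal.Quotient.exists_eq_pow_pred_smul_of_smul_eq_zero {R : Type*} [CommRing R]
    [IsDomain R] {t : R} (ht : t ≠ 0) {k : ℕ} {c : R ⧸ R ∙ t ^ k} (hc : t • c = 0) :
    ∃ c', c = t ^ (k - 1) • c' := by
  rcases k with _ | d
  · exact ⟨c, by simp⟩
  obtain ⟨r, rfl⟩ := Submodule.Quotient.mk_surjective _ c
  rw [← Submodule.Quotient.mk_smul, Submodule.Quotient.mk_eq_zero,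
    Submodule.mem_span_singleton] at hc
  obtain ⟨s, hs⟩ := hc
  refine ⟨Submodule.Quotient.mk s, ?_⟩
  rw [← Submodule.Quotient.mk_smul, Nat.add_sub_cancel, smul_eq_mul]
  congr 1
  refine mul_left_cancel₀ ht ?_
  rw [smul_eq_mul, smul_eq_mul] at hs
  rw [← hs, pow_succ]; ring

theorem exists_equiv_directSum_quotient_X_pow [FiniteDimensional K V] {f : Module.End K V}
    (hf : IsNilpotent f) :
    ∃ (d : ℕ) (k : Fin d → ℕ) (Φ : V ≃ₗ[K] ⨁ i : Fin d, K[X] ⧸ K[X] ∙ (X : K[X]) ^ k i),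
      ∀ x, Φ (f x) = (X : K[X]) • Φ x := by
  have htors : Module.IsTorsion' (Module.AEval' f) (Submonoid.powers (X : K[X])) := by
    obtain ⟨n, hn⟩ := hf
    intro m
    refine ⟨⟨X ^ n, n, rfl⟩, ?_⟩
    obtain ⟨x, rfl⟩ := (Module.AEval'.of f).surjective m
    change (X ^ n : K[X]) • Module.AEval'.of f x = 0
    rw [Module.AEval'.X_pow_smul_of, hn, zero_smul, map_zero]
  obtain ⟨d, k, ⟨q⟩⟩ := Module.torsion_by_prime_power_decomposition irreducible_X htors
  exact ⟨d, k, (Module.AEval'.of f).trans (q.restrictScalars K), fun x => by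
    simp [← Module.AEval'.X_smul_of]⟩

/-- Projections onto the summands of an `f`-invariant decomposition `V = ⨁ Vᵢ` in which
`f ^ exponent i` kills `Vᵢ` and the socle `ker f ⊓ Vᵢ` has height `exponent i - 1`, as for the
Jordan blocks of a nilpotent `f`. -/
structure BlockProjections (f : Module.End K V) where
  n : ℕ
  proj : Fin n → Module.End K V
  exponent : Fin n → ℕ
  commute : ∀ i, Commute (proj i) f
  idem : ∀ i, IsIdempotentElem (proj i)
  sum_eq_one : ∑ i, proj i = 1
  pow_exponent_mul : ∀ i, f ^ exponent i * proj i = 0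
  ker_inf_range_le : ∀ i, ker f ⊓ range (proj i) ≤ range (f ^ (exponent i - 1))

theorem nonempty_blockProjections [FiniteDimensional K V] {f : Module.End K V}
    (hf : IsNilpotent f) : Nonempty (BlockProjections f) := by
  classical
  obtain ⟨d, k, Φ, hΦ⟩ := exists_equiv_directSum_quotient_X_pow hf
  set β := fun i : Fin d => K[X] ⧸ K[X] ∙ (X : K[X]) ^ k i
  have hpow : ∀ j x, Φ ((f ^ j) x) = (X : K[X]) ^ j • Φ x := by
    intro j
    induction j with
    | zero => simp
    | succ j ih =>
      intro x
      rw [pow_succ', Module.End.mul_apply, hΦ, ih, pow_succ', mul_smul]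
  let π i : Module.End K V :=
    Φ.symm.toLinearMap ∘ₗ (lof K (Fin d) β i ∘ₗ component K (Fin d) β i) ∘ₗ Φ.toLinearMap
  have hπ : ∀ i x, Φ (π i x) = of β i (Φ x i) := fun i x => by simp [π, lof_eq_of]; rfl
  refine ⟨⟨d, π, k, fun i => ?_, fun i => ?_, ?_, fun i => ?_, fun i => ?_⟩⟩
  · ext x; apply Φ.injective
    simp only [Module.End.mul_apply, hπ, hΦ, DirectSum.smul_apply, of_smul]
  · ext x; apply Φ.injective
    simp only [Module.End.mul_apply, hπ, of_eq_same]
  · ext x; apply Φ.injective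
    simp only [LinearMap.sum_apply, map_sum, hπ, Module.End.one_apply, sum_univ_of]
  · ext x; apply Φ.injective
    simp only [Module.End.mul_apply, hpow, hπ, ← of_smul, LinearMap.zero_apply, map_zero]
    exact congrArg (of β i) (Ideal.Quotient.pow_smul_span_pow_eq_zero _ _ _) |>.trans (map_zero _)
  · rintro _ ⟨hker, x, rfl⟩
    have hX : (X : K[X]) • Φ x i = 0 := by
      apply DirectSum.of_injective (β := β) i
      rw [of_smul, ← hπ, ← hΦ, LinearMap.mem_ker.mp hker, map_zero, map_zero]
    obtain ⟨c, hc⟩ := Ideal.Quotient.exists_eq_pow_pred_smul_of_smul_eq_zero X_ne_zero hX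
    refine ⟨Φ.symm (of β i c), Φ.injective ?_⟩
    rw [hpow, LinearEquiv.apply_symm_apply, hπ, hc, of_smul]

namespace BlockProjections

variable {f : Module.End K V} (P : BlockProjections f)

theorem exists_proj_notMem {W : Submodule K V} {x : V} (hx : x ∉ W) : ∃ i, P.proj i x ∉ W := by
  by_contra! h
  have hsum : ∑ i, P.proj i x = x := by
    rw [← LinearMap.sum_apply, P.sum_eq_one, Module.End.one_apply]
  exact hx (hsum ▸ Submodule.sum_mem W fun i _ => h i)

theorem lt_exponent {i : Fin P.n} {m : ℕ} {x : V} (h : (f ^ m) (P.proj i x) ≠ 0) :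
    m < P.exponent i := by
  by_contra! hle
  obtain ⟨j, rfl⟩ := Nat.exists_eq_add_of_le' hle
  rw [pow_add, Module.End.mul_apply, ← Module.End.mul_apply (f ^ P.exponent i),
    P.pow_exponent_mul, LinearMap.zero_apply, map_zero] at h
  exact h rfl

theorem exists_proj_eq_self_pow_notMem {q : ℕ} {x : V} (hx : x ∈ ker f ⊓ range (f ^ q))
    (hx' : x ∉ range (f ^ (q + 1))) :
    ∃ i w, P.proj i w = w ∧ f ((f ^ q) w) = 0 ∧ (f ^ q) w ∉ range (f ^ (q + 1)) := by
  obtain ⟨hker, v, rfl⟩ := hx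
  obtain ⟨i, hi⟩ := P.exists_proj_notMem hx'
  rw [(P.commute i).apply_pow_apply] at hi
  refine ⟨i, P.proj i v, LinearMap.congr_fun (P.idem i).eq v, ?_, hi⟩
  rw [← (P.commute i).apply_pow_apply, ← (P.commute i).apply_apply, mem_ker.mp hker, map_zero]

theorem exists_proj_eq_zero_mem_ker_inf_range {i : Fin P.n} {r : ℕ} (hr : r < P.exponent i)
    {x : V} (hx : x ∈ ker f ⊓ range (f ^ (r - 1))) (hx' : x ∉ range (f ^ r)) :
    ∃ c, P.proj i c = 0 ∧ c ∈ ker f ⊓ range (f ^ (r - 1)) ∧ c ∉ range (f ^ r) := by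
  have hker : P.proj i x ∈ ker f := by
    rw [mem_ker, ← (P.commute i).apply_apply, mem_ker.mp hx.1, map_zero]
  have hrange : P.proj i x ∈ range (f ^ r) :=
    range_pow_le_range_pow f (by omega) (P.ker_inf_range_le i ⟨hker, mem_range_self _ x⟩)
  refine ⟨x - P.proj i x, ?_, sub_mem hx ⟨hker, range_pow_le_range_pow f (by omega) hrange⟩,
    fun h => hx' (by simpa using add_mem h hrange)⟩
  rw [map_sub, ← Module.End.mul_apply, (P.idem i).eq, sub_self]

end BlockProjections

theorem notMem_span_sup_of_apply_notMem {f : Module.End K V} {p q : ℕ} {y₀ u : V}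
    (hu : f u ∉ range (f ^ q)) (hc : y₀ - u ∉ range (f ^ p)) (hfc : f (y₀ - u) = 0) :
    u ∉ K ∙ y₀ ⊔ (range (f ^ p) ⊓ (range (f ^ q)).comap f) := by
  intro hmem
  obtain ⟨_, hs, d, ⟨hdp, hdq⟩, hsum⟩ := Submodule.mem_sup.mp hmem
  obtain ⟨a, rfl⟩ := Submodule.mem_span_singleton.mp hs
  by_cases ha : a = 1
  · subst ha
    exact hc (by rw [← hsum, one_smul, sub_add_cancel_left]; exact neg_mem hdp)
  · have hfy₀ : f y₀ = f u := by rwa [map_sub, sub_eq_zero] at hfc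
    have hfd : (1 - a) • f u = f d := by
      have hfsum := congrArg f hsum
      rw [map_add, map_smul, hfy₀] at hfsum
      linear_combination (norm := module) -hfsum
    apply hu
    rw [← inv_smul_smul₀ (sub_ne_zero.mpr (Ne.symm ha)) (f u), hfd]
    exact Submodule.smul_mem _ _ hdq

theorem exists_commute_separating [FiniteDimensional K V] {f : Module.End K V}
    (hf : IsNilpotent f) {aρ aτ : ℕ} (hρ : ulm f aρ ≠ 0) (hτ : ulm f aτ ≠ 0) (hρ1 : 1 ≤ aρ)
    (hρτ : aρ + 1 < aτ) :
    ∃ g : Module.End K V, Commute g f ∧ ∃ y₀ ∈ expTwoHeightSet f (aρ - 1) (aτ - 1),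
      f (g y₀) ∉ range (f ^ aτ) ∧ y₀ - g y₀ ∉ range (f ^ aρ) ∧ f (y₀ - g y₀) = 0 := by
  obtain ⟨P⟩ := nonempty_blockProjections hf
  have hτ1 : aτ - 1 + 1 = aτ := by omega
  obtain ⟨kτ, hkτ, hkτ'⟩ := exists_mem_ker_inf_range_of_ulm_ne_zero hτ
  rw [← hτ1] at hkτ'
  obtain ⟨i, w, hw, hk, hk'⟩ := P.exists_proj_eq_self_pow_notMem hkτ hkτ'
  have he : aτ - 1 < P.exponent i :=
    P.lt_exponent (x := w) (by rw [hw]; exact fun h => hk' (h ▸ zero_mem _))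
  obtain ⟨kρ, hkρ, hkρ'⟩ := exists_mem_ker_inf_range_of_ulm_ne_zero hρ
  obtain ⟨c, hc0, hc, hc'⟩ := P.exists_proj_eq_zero_mem_ker_inf_range (i := i) (by omega) hkρ hkρ'
  set u := (f ^ (aτ - 2)) w
  have hfu : f u = (f ^ (aτ - 1)) w := by
    rw [← Module.End.mul_apply, ← pow_succ', show aτ - 2 + 1 = aτ - 1 by omega]
  have hgu : P.proj i (c + u) = u := by
    rw [map_add, hc0, zero_add, (P.commute i).apply_pow_apply, hw]
  refine ⟨P.proj i, P.commute i, c + u, ?_, ?_, ?_, ?_⟩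
  · refine add_mem_expTwoHeightSet hc (by rwa [show aρ - 1 + 1 = aρ by omega])
      (range_pow_le_range_pow f (by omega) (mem_range_self _ w)) ?_ (hfu ▸ hk')
    exact hfu ▸ ⟨mem_ker.mpr hk, mem_range_self _ w⟩
  · rw [hgu, hfu, ← hτ1]; exact hk'
  · rwa [hgu, add_sub_cancel_right]
  · rw [hgu, add_sub_cancel_right]; exact mem_ker.mp hc.1

section GaloisFieldTwo

variable {W : Type*} [AddCommGroup W] [Module (ZMod 2) W]

theorem eq_of_ne_zero_of_finrank_eq_one (h : Module.finrank (ZMod 2) W = 1) {u w : W}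
    (hu : u ≠ 0) (hw : w ≠ 0) : u = w := by
  obtain ⟨v, -, hv⟩ := finrank_eq_one_iff'.mp h
  have key : ∀ x : W, x ≠ 0 → x = v := by
    intro x hx
    obtain ⟨a, rfl⟩ := hv x
    rcases (by decide : ∀ b : ZMod 2, b = 0 ∨ b = 1) a with rfl | rfl
    · simp at hx
    · exact one_smul _ v
  rw [key u hu, key w hw]

variable [FiniteDimensional (ZMod 2) W]

theorem Submodule.sub_mem_of_finrank_eq_succ {A B : Submodule (ZMod 2) W} (hBA : B ≤ A)
    (h : Module.finrank (ZMod 2) A = Module.finrank (ZMod 2) B + 1) {x y : W}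
    (hx : x ∈ A) (hxB : x ∉ B) (hy : y ∈ A) (hyB : y ∉ B) : x - y ∈ B := by
  set B' := B.comap A.subtype
  have hq : Module.finrank (ZMod 2) (A ⧸ B') = 1 := by
    have h1 := B'.finrank_quotient_add_finrank
    have h2 : Module.finrank (ZMod 2) B' = Module.finrank (ZMod 2) B :=
      (Submodule.comapSubtypeEquivOfLe hBA).finrank_eq
    omega
  have hmem : ∀ z (hz : z ∈ A), B'.mkQ ⟨z, hz⟩ = 0 ↔ z ∈ B := fun z hz => by simp [B']
  have heq := eq_of_ne_zero_of_finrank_eq_one hq (mt (hmem x hx).1 hxB) (mt (hmem y hy).1 hyB)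
  rw [← sub_eq_zero, ← map_sub] at heq
  exact (hmem (x - y) (sub_mem hx hy)).1 heq

variable {f : Module.End (ZMod 2) W}

theorem sub_mem_range_of_ulm_eq_one {r : ℕ} (h : ulm f r = 1) {x y : W}
    (hx : x ∈ ker f ⊓ range (f ^ (r - 1))) (hx' : x ∉ range (f ^ r))
    (hy : y ∈ ker f ⊓ range (f ^ (r - 1))) (hy' : y ∉ range (f ^ r)) :
    x - y ∈ range (f ^ r) := by
  have hle : ker f ⊓ range (f ^ r) ≤ ker f ⊓ range (f ^ (r - 1)) :=
    inf_le_inf_left _ (range_pow_le_range_pow f (Nat.sub_le r 1))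
  have hrank := Submodule.finrank_mono hle
  exact (Submodule.sub_mem_of_finrank_eq_succ hle (by unfold ulm at h; omega) hx
    (fun h => hx' h.2) hy (fun h => hy' h.2)).2

variable {aρ aτ : ℕ}

theorem sub_mem_range_of_mem_expTwoHeightSet (hdρ : ulm f aρ = 1) (hdτ : ulm f aτ = 1)
    (hρ1 : 1 ≤ aρ) (hρτ : aρ + 1 < aτ) {y y₀ : W}
    (hy : y ∈ expTwoHeightSet f (aρ - 1) (aτ - 1))
    (hy₀ : y₀ ∈ expTwoHeightSet f (aρ - 1) (aτ - 1)) :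
    y - y₀ ∈ range (f ^ aρ) ∧ f (y - y₀) ∈ range (f ^ aτ) := by
  have hτ : aτ - 1 + 1 = aτ := by omega
  obtain ⟨hfy, hfy'⟩ := apply_mem_of_mem_expTwoHeightSet hy
  obtain ⟨hfy₀, hfy₀'⟩ := apply_mem_of_mem_expTwoHeightSet hy₀
  rw [hτ] at hfy' hfy₀'
  refine ⟨?_, by rw [map_sub]; exact sub_mem_range_of_ulm_eq_one hdτ hfy hfy' hfy₀ hfy₀'⟩
  have hle := range_pow_le_range_pow f (show aρ + 1 ≤ aτ - 1 by omega)
  obtain ⟨z, hz, hz'⟩ := exists_sub_pow_mem_ker_inf_range hρ1 hy.2.1 (hle hfy.2)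
  obtain ⟨z₀, hz₀, hz₀'⟩ := exists_sub_pow_mem_ker_inf_range hρ1 hy₀.2.1 (hle hfy₀.2)
  have hsplit : y - y₀ = (y - (f ^ aρ) z - (y₀ - (f ^ aρ) z₀)) + (f ^ aρ) (z - z₀) := by
    rw [map_sub]; abel
  rw [hsplit]
  exact add_mem (sub_mem_range_of_ulm_eq_one hdρ hz hz' hz₀ hz₀') (mem_range_self _ _)

theorem iSup_cyc_le_span_sup (hdρ : ulm f aρ = 1) (hdτ : ulm f aτ = 1) (hρ1 : 1 ≤ aρ)
    (hρτ : aρ + 1 < aτ) {y₀ : W} (hy₀ : y₀ ∈ expTwoHeightSet f (aρ - 1) (aτ - 1)) :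
    ⨆ y ∈ expTwoHeightSet f (aρ - 1) (aτ - 1), cyc f y ≤
      (ZMod 2) ∙ y₀ ⊔ (range (f ^ aρ) ⊓ (range (f ^ aτ)).comap f) := by
  refine iSup₂_le fun y hy => ?_
  obtain ⟨hdiff, hfdiff⟩ := sub_mem_range_of_mem_expTwoHeightSet hdρ hdτ hρ1 hρτ hy hy₀
  obtain ⟨hfy, -⟩ := apply_mem_of_mem_expTwoHeightSet hy
  rw [cyc, Submodule.span_le]
  rintro _ ⟨_ | _ | j, rfl⟩
  · show y ∈ _
    rw [← add_sub_cancel y₀ y]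
    exact add_mem (Submodule.mem_sup_left (Submodule.mem_span_singleton_self y₀))
      (Submodule.mem_sup_right ⟨hdiff, hfdiff⟩)
  · show (f ^ 1) y ∈ _
    rw [pow_one]
    refine Submodule.mem_sup_right ⟨range_pow_le_range_pow f (by omega) hfy.2, ?_⟩
    show f (f y) ∈ range (f ^ aτ)
    rw [mem_ker.mp hfy.1]
    exact zero_mem _
  · show (f ^ (j + 2)) y ∈ _
    rw [pow_add, Module.End.mul_apply, hy.1.1, map_zero]
    exact zero_mem _

end GaloisFieldTwo

theorem stmt16 {V : Type*} [AddCommGroup V] [Module (ZMod 2) V]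
    [FiniteDimensional (ZMod 2) V] (f : V →ₗ[ZMod 2] V) (hf : IsNilpotent f)
    (aρ aτ : ℕ) (hρ1 : 1 ≤ aρ) (hρτ : aτ > aρ + 1)
    (hdρ : ulm f aρ = 1) (hdτ : ulm f aτ = 1)
    (Y : Set V)
    (hY : Y = {y : V | ExpEq f y 2 ∧ HeightEq f y (aρ - 1) ∧ HeightEq f (f y) (aτ - 1)}) :
    Chinv f (⨆ y ∈ Y, cyc f y) ∧ ¬ Hinv f (⨆ y ∈ Y, cyc f y) := by
  replace hY : Y = expTwoHeightSet f (aρ - 1) (aτ - 1) := hY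
  subst hY
  refine ⟨chinv_iSup_cyc fun e he => e.image_expTwoHeightSet he, fun hHinv => ?_⟩
  obtain ⟨g, hg, y₀, hy₀, hgu, hc, hfc⟩ :=
    exists_commute_separating hf (by omega : ulm f aρ ≠ 0) (by omega) hρ1 hρτ
  have hy₀X : y₀ ∈ ⨆ y ∈ expTwoHeightSet f (aρ - 1) (aτ - 1), cyc f y :=
    le_iSup₂ (f := fun y _ => cyc f y) y₀ hy₀ (mem_cyc_self f y₀)
  exact notMem_span_sup_of_apply_notMem hgu hc hfc
    (iSup_cyc_le_span_sup hdρ hdτ hρ1 hρτ hy₀ (hHinv g hg (Submodule.mem_map_of_mem hy₀X)))
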